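/- The Euclidean projection of a point u ∈ ℝᴷ onto the set {x ∈ ℝᴷ : x ≥ 0, ‖x‖ ≤ r} (intersection of a ball of radius r > 0 centered at 0 with the nonnegative orthant) equals (r / max(‖[u]₊‖, r)) · [u]₊, where [u]₊ is the componentwise positive part of u. -/

import Mathlib

/-!
Write `u⁺` for the positive part of `u`, which is the projection of `u` onto the orthant:
`⟪u⁺, u⁺ - u⟫ = 0` and `⟪x, u⁺ - u⟫ ≥ 0` for every `x ≥ 0`. Hence for `x ≥ 0`,
`‖x - u‖² ≥ ‖x - u⁺‖² + ‖u⁺ - u‖²`, with equality at every multiple of `u⁺`, in particular at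
`p = (r / max ‖u⁺‖ r) • u⁺`. So it suffices that `p`, the radial retraction of `u⁺` onto the
ball, is a point of the ball nearest to `u⁺`; this holds in any real normed space, since
`‖p - u⁺‖ = max (‖u⁺‖ - r) 0 ≤ ‖x - u⁺‖` whenever `‖x‖ ≤ r`.
-/

open RealInnerProductSpace

theorem norm_sub_le_norm_sub_of_inner_sub_nonneg {E : Type*} [NormedAddCommGroup E]
    [InnerProductSpace ℝ E] {u w p x : E} (hp : ⟪p - w, w - u⟫ = 0) (hx : 0 ≤ ⟪x - w, w - u⟫)
    (hpx : ‖p - w‖ ≤ ‖x - w‖) : ‖p - u‖ ≤ ‖x - u‖ := by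
  have expand : ∀ y : E, ‖y - u‖ ^ 2 = ‖y - w‖ ^ 2 + 2 * ⟪y - w, w - u⟫ + ‖w - u‖ ^ 2 :=
    fun y => by rw [← norm_add_sq_real, sub_add_sub_cancel]
  rw [← sq_le_sq₀ (norm_nonneg _) (norm_nonneg _), expand p, expand x, hp]
  nlinarith [norm_nonneg (p - w)]

section Ball

variable {E : Type*} [NormedAddCommGroup E] [NormedSpace ℝ E] {r : ℝ}

theorem norm_div_max_smul_le (hr : 0 ≤ r) (v : E) : ‖(r / max ‖v‖ r) • v‖ ≤ r := by
  rw [norm_smul, Real.norm_of_nonneg (by positivity), div_mul_eq_mul_div]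
  exact div_le_of_le_mul₀ (by positivity) hr (by gcongr; exact le_max_left _ _)

theorem norm_div_max_smul_sub_self (hr : 0 ≤ r) (v : E) :
    ‖(r / max ‖v‖ r) • v - v‖ = max (‖v‖ - r) 0 := by
  rcases le_or_gt ‖v‖ r with h | h
  · rw [max_eq_right h, max_eq_right (by linarith)]
    rcases hr.eq_or_lt with rfl | hr
    · simp [norm_le_zero_iff.mp h]
    · simp [div_self hr.ne']
  · have hv : 0 < ‖v‖ := hr.trans_lt h
    rw [max_eq_left h.le, max_eq_left (by linarith),
      show (r / ‖v‖) • v - v = (r / ‖v‖ - 1) • v by rw [sub_smul, one_smul], norm_smul,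
      Real.norm_of_nonpos (by rw [sub_nonpos]; exact div_le_one_of_le₀ h.le hv.le)]
    field_simp
    ring

theorem norm_div_max_smul_sub_le {x : E} (hx : ‖x‖ ≤ r) (v : E) :
    ‖(r / max ‖v‖ r) • v - v‖ ≤ ‖x - v‖ := by
  rw [norm_div_max_smul_sub_self ((norm_nonneg x).trans hx), norm_sub_rev]
  exact max_le (by linarith [norm_sub_norm_le v x]) (norm_nonneg _)

end Ball

namespace EuclideanSpace

variable {ι : Type*}

def positivePart (u : EuclideanSpace ℝ ι) : EuclideanSpace ℝ ι :=
  WithLp.toLp 2 fun i => max (u i) 0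

@[simp]
theorem positivePart_apply (u : EuclideanSpace ℝ ι) (i : ι) : positivePart u i = max (u i) 0 :=
  rfl

theorem positivePart_nonneg (u : EuclideanSpace ℝ ι) (i : ι) : 0 ≤ positivePart u i :=
  le_max_right _ _

variable [Fintype ι]

theorem inner_positivePart_sub_self (u : EuclideanSpace ℝ ι) :
    ⟪positivePart u, positivePart u - u⟫ = 0 := by
  simp only [PiLp.inner_apply, PiLp.sub_apply, positivePart_apply, RCLike.inner_apply,
    conj_trivial]
  refine Finset.sum_eq_zero fun i _ => ?_
  rcases le_total 0 (u i) with h | h <;> simp [h]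

theorem inner_positivePart_sub_self_nonneg {x : EuclideanSpace ℝ ι} (hx : ∀ i, 0 ≤ x i)
    (u : EuclideanSpace ℝ ι) : 0 ≤ ⟪x, positivePart u - u⟫ := by
  simp only [PiLp.inner_apply, PiLp.sub_apply, positivePart_apply, RCLike.inner_apply,
    conj_trivial]
  exact Finset.sum_nonneg fun i _ => mul_nonneg (by simp) (hx i)

end EuclideanSpace

open EuclideanSpace in
theorem projection_ball_nonneg_orthant
    (K : ℕ) (r : ℝ) (hr : 0 < r) (u : EuclideanSpace ℝ (Fin K)) :
    letI upos : EuclideanSpace ℝ (Fin K) := WithLp.toLp 2 (fun i => max (u i) 0)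
    letI p : EuclideanSpace ℝ (Fin K) := (r / max ‖upos‖ r) • upos
    (∀ i, 0 ≤ p i) ∧ ‖p‖ ≤ r ∧
      ∀ x : EuclideanSpace ℝ (Fin K), (∀ i, 0 ≤ x i) → ‖x‖ ≤ r →
        ‖p - u‖ ≤ ‖x - u‖ := by
  change let c := r / max ‖positivePart u‖ r
    (∀ i, 0 ≤ (c • positivePart u) i) ∧ ‖c • positivePart u‖ ≤ r ∧
      ∀ x : EuclideanSpace ℝ (Fin K), (∀ i, 0 ≤ x i) → ‖x‖ ≤ r →
        ‖c • positivePart u - u‖ ≤ ‖x - u‖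
  intro c
  have hc : 0 ≤ c := by positivity
  refine ⟨fun i => mul_nonneg hc (positivePart_nonneg u i), norm_div_max_smul_le hr.le _,
    fun x hx hxr =>
      norm_sub_le_norm_sub_of_inner_sub_nonneg ?_ ?_ (norm_div_max_smul_sub_le hxr _)⟩
  all_goals rw [inner_sub_left, inner_positivePart_sub_self, sub_zero]
  · rw [real_inner_smul_left, inner_positivePart_sub_self, mul_zero]
  · exact inner_positivePart_sub_self_nonneg hx u
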